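/- arXiv:0806.4730 — 3 statements merged into one kernel-verified Lean document; each statement's English description precedes it below -/
import Mathlib

section
/- (Lorentz inequality, finite version.) Let q, g ∈ ℝⁿ be vectors, and let q*, g* denote the vectors with the same entries sorted in increasing order. Then for any submodular function L : ℝ² → [0,∞), ∑ᵢ L(q*ᵢ, g*ᵢ) ≤ ∑ᵢ L(qᵢ, gᵢ). -/
/-!
Sorting both vectors pairs them monotonically, so it suffices that a monotone pairing of `f` and
`g` minimises `∑ L (f i) (g (σ i))` over permutations `σ`. If `a` is the largest index moved by
`σ`, composing with the transposition of `a` and `σ a` fixes `a` and exchanges the partners of `a`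
and `σ⁻¹ a`; as `f (σ⁻¹ a) ≤ f a` and `g (σ a) ≤ g a`, submodularity says this does not increase
the sum. Induction on the size of the support of `σ` concludes.
-/

open Finset Equiv Equiv.Perm

def IsSubmodular {α β M : Type*} [LinearOrder α] [LinearOrder β] [Add M] [LE M]
    (L : α → β → M) : Prop :=
  ∀ v t v' t', L (min v v') (min t t') + L (max v v') (max t t') ≤ L v t + L v' t'

namespace IsSubmodular

variable {ι α β M : Type*} [LinearOrder α] [LinearOrder β]

theorem add_le_add_cross [Add M] [LE M] {L : α → β → M} (hL : IsSubmodular L) {a a' : α}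
    {b b' : β} (ha : a ≤ a') (hb : b ≤ b') : L a b + L a' b' ≤ L a b' + L a' b := by
  simpa only [min_eq_left ha, max_eq_right ha, min_eq_right hb, max_eq_left hb]
    using hL a b' a' b

variable [AddCommMonoid M] [PartialOrder M] [IsOrderedAddMonoid M] {L : α → β → M}
  [Fintype ι] {f : ι → α} {g : ι → β}

theorem sum_swap_mul_le [DecidableEq ι] (hL : IsSubmodular L) {σ : Perm ι} {a : ι}
    (hf : f (σ⁻¹ a) ≤ f a) (hg : g (σ a) ≤ g a) :
    ∑ i, L (f i) (g ((swap a (σ a) * σ) i)) ≤ ∑ i, L (f i) (g (σ i)) := by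
  obtain hσa | hσa := eq_or_ne (σ a) a
  · rw [hσa, swap_self, ← Perm.one_def, one_mul]
  set j := σ⁻¹ a
  have hja : j ≠ a := fun h ↦ hσa (inv_eq_iff_eq.mp h).symm
  rw [← sum_add_sum_compl {j, a}, ← sum_add_sum_compl {j, a} (fun i ↦ L (f i) (g (σ i)))]
  refine add_le_add ?pair (sum_congr rfl fun i hi_compl ↦ ?_).le
  case pair =>
    rw [sum_pair hja, sum_pair hja]
    simpa only [mul_apply, j, Perm.coe_inv, apply_symm_apply, swap_apply_left,
      swap_apply_right] using hL.add_le_add_cross hf hg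
  have hi : i ≠ j ∧ i ≠ a := by
    simpa only [mem_compl, mem_insert, mem_singleton, not_or] using hi_compl
  rw [mul_apply, swap_apply_of_ne_of_ne (fun h ↦ hi.1 (eq_inv_iff_eq.mpr h)) (σ.injective.ne hi.2)]

theorem sum_le_sum_comp_perm [LinearOrder ι] (hL : IsSubmodular L) (hf : Monotone f)
    (hg : Monotone g) (σ : Perm ι) : ∑ i, L (f i) (g i) ≤ ∑ i, L (f i) (g (σ i)) := by
  obtain rfl | hσ := eq_or_ne σ 1
  · rfl
  have hne : σ.support.Nonempty := nonempty_iff_ne_empty.mpr (support_eq_empty_iff.not.mpr hσ)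
  set a := σ.support.max' hne
  have ha : a ∈ σ.support := max'_mem _ _
  have hσa : σ a ≠ a := mem_support.mp ha
  have hσ_inv_a : σ⁻¹ a ∈ σ.support :=
    apply_mem_support.mp (by simpa only [Perm.coe_inv, apply_symm_apply] using ha)
  calc ∑ i, L (f i) (g i) ≤ ∑ i, L (f i) (g ((swap a (σ a) * σ) i)) :=
        sum_le_sum_comp_perm hL hf hg _
    _ ≤ ∑ i, L (f i) (g (σ i)) :=
        hL.sum_swap_mul_le (hf (le_max' _ _ hσ_inv_a))
          (hg (le_max' _ _ (apply_mem_support.mpr ha)))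
termination_by σ.support.card
decreasing_by exact card_support_swap_mul hσa

end IsSubmodular

theorem lorentz_finite_general (n : ℕ) (q g : Fin n → ℝ) (L : ℝ → ℝ → ℝ)
    (hsub : ∀ v t v' t' : ℝ,
      L (min v v') (min t t') + L (max v v') (max t t') ≤ L v t + L v' t') :
    ∑ i : Fin n, L (q (Tuple.sort q i)) (g (Tuple.sort g i)) ≤
      ∑ i : Fin n, L (q i) (g i) := by
  set σq := Tuple.sort q
  set σg := Tuple.sort g
  calc ∑ i, L (q (σq i)) (g (σg i))
      ≤ ∑ i, L (q (σq i)) (g (σg ((σg⁻¹ * σq) i))) :=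
        IsSubmodular.sum_le_sum_comp_perm hsub (Tuple.monotone_sort q) (Tuple.monotone_sort g) _
    _ = ∑ i, L (q i) (g i) := by
        simp only [mul_apply, Perm.coe_inv, apply_symm_apply]
        exact Equiv.sum_comp σq fun i ↦ L (q i) (g i)

/-- Lorentz inequality, finite version: sorting both vectors in increasing order
weakly reduces the sum of any submodular discrepancy. -/
theorem lorentz_finite (n : ℕ) (q g : Fin n → ℝ) (L : ℝ → ℝ → ℝ)
    (hL0 : ∀ v t, 0 ≤ L v t)
    (hsub : ∀ v t v' t' : ℝ,
      L (min v v') (min t t') + L (max v v') (max t t') ≤ L v t + L v' t') :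
    ∑ i : Fin n, L (q (Tuple.sort q i)) (g (Tuple.sort g i)) ≤
      ∑ i : Fin n, L (q i) (g i) :=
  lorentz_finite_general n q g L hsub
end

section
/- Let f₀ : [0,1]^d → K be weakly increasing and measurable, and f̄ : [0,1]^d → K measurable. Then for any coordinate j and any p ∈ [1,∞), (∫_{[0,1]^d} |R_j f̄(x) − f₀(x)|^p dx)^{1/p} ≤ (∫_{[0,1]^d} |f̄(x) − f₀(x)|^p dx)^{1/p}, where R_j is the increasing rearrangement with respect to the j-th coordinate. -/
/-!
Fix a line parallel to the `j`-th axis and let `g`, `h` be the slices of `fbar`, `f₀` on it.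
The slice of `rearrCoord j fbar` is the quantile function `φ` of the law of `g` on `[0, 1]`:
a monotone function on `(0, 1)` with the same distribution as `g`. As
`|x| ^ p = ∫₀^∞ p (p - 1) c ^ (p - 2) (|x| - c)₊ dc`, it suffices to compare the integrals of
the hinges `(φ - h - c)₊` and `(h - φ - c)₊` with those for `g`. By the layer-cake formula
these are integrals over `u` of the measures of `{φ > u + c} \ {h > u}` and
`{h > u + c} \ {φ > u}`. Super-level sets of the monotone functions `φ` and `h` are nested,
and among all sets of a given measure, one nested with `B` has the smallest differences with
`B` on both sides. Fubini integrates the inequality on each line over the other coordinates.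
-/

open MeasureTheory

/-- Increasing rearrangement with respect to the `j`-th coordinate. -/
noncomputable def rearrCoord {d : ℕ} (j : Fin d) (f : (Fin d → ℝ) → ℝ)
    (x : Fin d → ℝ) : ℝ :=
  sInf {y : ℝ | x j ≤
    (volume (Set.Icc (0:ℝ) 1 ∩ {t : ℝ | f (Function.update x j t) ≤ y})).toReal}

open Set Function ProbabilityTheory
open scoped ENNReal

lemma measurable_sInf_of_isUpperSet {α : Type*} [MeasurableSpace α] {S : α → Set ℝ}
    (hS : ∀ x, IsUpperSet (S x)) (hmeas : ∀ y, MeasurableSet {x | y ∈ S x}) :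
    Measurable fun x => sInf (S x) := by
  set E := {x | ∃ q : ℚ, (q : ℝ) ∈ S x} ∩ {x | ∃ q : ℚ, (q : ℝ) ∉ S x}
  have hE : MeasurableSet E := by
    simp only [E, ofPred_exists]
    exact (MeasurableSet.iUnion fun q : ℚ => hmeas q).inter
      (MeasurableSet.iUnion fun q : ℚ => (hmeas q).compl)
  have hE_iff : ∀ x, x ∈ E ↔ (S x).Nonempty ∧ BddBelow (S x) := by
    intro x
    constructor
    · rintro ⟨⟨q, hq⟩, ⟨r, hr⟩⟩
      exact ⟨⟨q, hq⟩, r, fun y hy => not_lt.1 fun hyr => hr (hS x hyr.le hy)⟩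
    · rintro ⟨⟨y, hy⟩, ⟨b, hb⟩⟩
      obtain ⟨q, hq⟩ := exists_rat_gt y
      obtain ⟨r, hr⟩ := exists_rat_lt b
      exact ⟨⟨q, hS x hq.le hy⟩, ⟨r, fun hrS => (hb hrS).not_gt hr⟩⟩
  refine measurable_of_Iio fun a => ?_
  -- off `E`, the infimum takes the junk value `sInf ∅ = sInf univ = 0`
  convert hE.ite (MeasurableSet.iUnion fun q : ℚ => (hmeas q).inter
    (measurableSet_lt measurable_const measurable_const : MeasurableSet {_x : α | (q : ℝ) < a}))
    (MeasurableSet.const (0 < a)) using 1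
  ext x
  by_cases hx : x ∈ E
  · obtain ⟨hne, hbdd⟩ := (hE_iff x).1 hx
    simp only [mem_preimage, mem_Iio, Set.ite, mem_union, mem_inter_iff, mem_iUnion, mem_ofPred_eq,
      hx, and_true, mem_sdiff, not_true, and_false, or_false, csInf_lt_iff hbdd hne]
    constructor
    · rintro ⟨b, hb, hba⟩
      obtain ⟨q, hbq, hqa⟩ := exists_rat_btwn hba
      exact ⟨q, hS x hbq.le hb, hqa⟩
    · exact fun ⟨q, hq, hqa⟩ => ⟨q, hq, hqa⟩
  · have hzero : sInf (S x) = 0 := by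
      rcases not_and_or.1 (mt (hE_iff x).2 hx) with hne | hbdd
      · rw [not_nonempty_iff_eq_empty.1 hne, Real.sInf_empty]
      · exact Real.sInf_of_not_bddBelow hbdd
    simp [Set.ite, hx, hzero]

noncomputable def quantile (μ : Measure ℝ) (s : ℝ) : ℝ :=
  sInf {y | s ≤ cdf μ y}

lemma measurable_quantile (μ : Measure ℝ) : Measurable (quantile μ) :=
  measurable_sInf_of_isUpperSet (fun _ _ _ hab h => h.trans ((cdf μ).mono hab))
    fun _ => measurableSet_Iic

lemma quantile_le_iff (μ : Measure ℝ) {s : ℝ} (hs : s ∈ Ioo 0 1) (a : ℝ) :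
    quantile μ s ≤ a ↔ s ≤ cdf μ a := by
  set S := {y | s ≤ cdf μ y}
  have hne : S.Nonempty :=
    (((tendsto_cdf_atTop μ).eventually (lt_mem_nhds hs.2)).exists).imp fun _ => le_of_lt
  obtain ⟨y₀, hy₀⟩ := ((tendsto_cdf_atBot μ).eventually (gt_mem_nhds hs.1)).exists
  have hbdd : BddBelow S :=
    ⟨y₀, fun y hy => not_lt.1 fun hyy₀ => ((cdf μ).mono hyy₀.le |>.trans_lt hy₀).not_ge hy⟩
  -- right-continuity of `cdf μ` puts the infimum inside `S`
  have hmem : s ≤ cdf μ (sInf S) := by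
    refine ge_of_tendsto (((cdf μ).right_continuous _).mono Ioi_subset_Ici_self)
      (eventually_nhdsWithin_of_forall fun y hy => ?_)
    obtain ⟨b, hb, hby⟩ := exists_lt_of_csInf_lt hne hy
    exact hb.trans ((cdf μ).mono hby.le)
  exact ⟨fun h => hmem.trans ((cdf μ).mono h), fun h => csInf_le hbdd h⟩

lemma monotoneOn_quantile (μ : Measure ℝ) : MonotoneOn (quantile μ) (Ioo 0 1) :=
  fun _ hs _ ht hst => (quantile_le_iff μ hs _).2 (hst.trans ((quantile_le_iff μ ht _).1 le_rfl))

lemma map_restrict_Ioo_quantile (μ : Measure ℝ) [IsProbabilityMeasure μ] :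
    (volume.restrict (Ioo 0 1)).map (quantile μ) = μ := by
  refine (Measure.ext_of_Iic μ _ fun a => ?_).symm
  have hpre : quantile μ ⁻¹' Iic a ∩ Ioo 0 1 = Ioo 0 1 ∩ Iic (cdf μ a) := by
    ext s
    simp only [mem_inter_iff, mem_preimage, mem_Iic]
    exact ⟨fun ⟨h, hs⟩ => ⟨hs, (quantile_le_iff μ hs a).1 h⟩,
      fun ⟨hs, h⟩ => ⟨(quantile_le_iff μ hs a).2 h, hs⟩⟩
  rw [Measure.map_apply (measurable_quantile μ) measurableSet_Iic,
    Measure.restrict_apply (measurableSet_Iic.preimage (measurable_quantile μ)), hpre,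
    ← ofReal_cdf, measure_congr ((Ioo_ae_eq_Ioc (μ := volume)).inter (ae_eq_refl (Iic _))),
    Ioc_inter_Iic, Real.volume_Ioc, min_eq_right (cdf_le_one μ a), sub_zero]

lemma measurable_rearrCoord {d : ℕ} (j : Fin d) {f : (Fin d → ℝ) → ℝ} (hf : Measurable f) :
    Measurable (rearrCoord j f) := by
  refine measurable_sInf_of_isUpperSet (fun x a b hab ha => ha.trans (ENNReal.toReal_mono ?_ ?_))
    fun y => measurableSet_le (measurable_pi_apply j) (Measurable.ennreal_toReal ?_)
  · exact measure_ne_top_of_subset inter_subset_left (by simp [Real.volume_Icc])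
  · exact measure_mono fun t ht => ⟨ht.1, ht.2.trans hab⟩
  · exact measurable_measure_prodMk_left (measurableSet_Icc.preimage measurable_snd |>.inter
      (measurableSet_Iic.preimage (hf.comp measurable_update')))

lemma rearrCoord_update {d : ℕ} (j : Fin d) {f : (Fin d → ℝ) → ℝ} (hf : Measurable f)
    (x : Fin d → ℝ) (t : ℝ) :
    rearrCoord j f (update x j t) =
      quantile ((volume.restrict (Icc 0 1)).map fun t => f (update x j t)) t := by
  have : IsProbabilityMeasure (volume.restrict (Icc (0 : ℝ) 1)) := ⟨by simp⟩
  have hslice : Measurable fun t => f (update x j t) := hf.comp (measurable_update x)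
  have := Measure.isProbabilityMeasure_map (μ := volume.restrict (Icc (0 : ℝ) 1))
    hslice.aemeasurable
  simp only [rearrCoord, quantile, update_self, update_idem]
  congr! 3 with y
  rw [cdf_eq_real, measureReal_def, Measure.map_apply hslice measurableSet_Iic,
    Measure.restrict_apply' measurableSet_Icc, inter_comm]
  rfl

section NestedSets

variable {α : Type*} [MeasurableSpace α] {μ : Measure α}

lemma measure_inter_le_of_nested {X Y B : Set α} (hXY : μ X = μ Y)
    (hnest : Y ≤ᵐ[μ] B ∨ B ≤ᵐ[μ] Y) : μ (X ∩ B) ≤ μ (Y ∩ B) := by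
  rcases hnest with hYB | hBY
  · calc μ (X ∩ B) ≤ μ X := measure_mono inter_subset_left
      _ = μ Y := hXY
      _ ≤ μ (Y ∩ B) := measure_mono_ae (by filter_upwards [hYB] with s hs hY using ⟨hY, hs hY⟩)
  · calc μ (X ∩ B) ≤ μ B := measure_mono inter_subset_right
      _ ≤ μ (Y ∩ B) := measure_mono_ae (by filter_upwards [hBY] with s hs hB using ⟨hs hB, hB⟩)

lemma measure_diff_le_of_measure_inter_le [IsFiniteMeasure μ] {A A' T T' : Set α}
    (hT : MeasurableSet T) (hT' : MeasurableSet T') (hA : μ A = μ A')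
    (h : μ (A' ∩ T') ≤ μ (A ∩ T)) : μ (A \ T) ≤ μ (A' \ T') := by
  refine ENNReal.le_of_add_le_add_left (measure_ne_top μ (A ∩ T)) ?_
  calc μ (A ∩ T) + μ (A \ T) = μ (A' ∩ T') + μ (A' \ T') := by
        rw [measure_inter_add_sdiff A hT, measure_inter_add_sdiff A' hT', hA]
    _ ≤ μ (A ∩ T) + μ (A' \ T') := by gcongr

lemma measure_diff_le_of_nested [IsFiniteMeasure μ] {X Y B : Set α} (hX : MeasurableSet X)
    (hY : MeasurableSet Y) (hB : MeasurableSet B) (hXY : μ X = μ Y)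
    (hnest : Y ≤ᵐ[μ] B ∨ B ≤ᵐ[μ] Y) : μ (Y \ B) ≤ μ (X \ B) ∧ μ (B \ Y) ≤ μ (B \ X) := by
  have hinter := measure_inter_le_of_nested hXY hnest
  refine ⟨measure_diff_le_of_measure_inter_le hB hB hXY.symm hinter,
    measure_diff_le_of_measure_inter_le hY hX rfl ?_⟩
  rwa [inter_comm B, inter_comm B]

lemma ae_restrict_nested_of_monotoneOn [LinearOrder α] {I : Set α} (hI : MeasurableSet I)
    {φ ψ : α → ℝ} (hφ : MonotoneOn φ I) (hψ : MonotoneOn ψ I) (v u : ℝ) :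
    {s | v < φ s} ≤ᵐ[μ.restrict I] {s | u < ψ s} ∨
      {s | u < ψ s} ≤ᵐ[μ.restrict I] {s | v < φ s} := by
  have : (∀ s ∈ I, v < φ s → u < ψ s) ∨ (∀ s ∈ I, u < ψ s → v < φ s) := by
    by_contra! ⟨⟨a, ha, hφa, hψa⟩, ⟨b, hb, hψb, hφb⟩⟩
    rcases le_total a b with hab | hba
    · linarith [hφ ha hb hab]
    · linarith [hψ hb ha hba]
  exact this.imp (ae_restrict_of_forall_mem hI) (ae_restrict_of_forall_mem hI)

end NestedSets

section Hinge

variable {α : Type*} [MeasurableSpace α] {μ : Measure α}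

lemma lintegral_ofReal_sub_sub [SFinite μ] {f g : α → ℝ} (hf : Measurable f)
    (hg : Measurable g) (c : ℝ) :
    ∫⁻ x, ENNReal.ofReal (f x - g x - c) ∂μ = ∫⁻ u, μ ({x | u + c < f x} \ {x | u < g x}) := by
  set E := {q : α × ℝ | g q.1 ≤ q.2 ∧ q.2 + c < f q.1}
  have hE : MeasurableSet E :=
    (measurableSet_le (hg.comp measurable_fst) measurable_snd).inter
      (measurableSet_lt (measurable_snd.add_const c) (hf.comp measurable_fst))
  calc ∫⁻ x, ENNReal.ofReal (f x - g x - c) ∂μ = ∫⁻ x, volume (Prod.mk x ⁻¹' E) ∂μ := by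
        refine lintegral_congr fun x => ?_
        have : Prod.mk x ⁻¹' E = Ico (g x) (f x - c) := by
          ext u; simp [E, lt_sub_iff_add_lt]
        rw [this, Real.volume_Ico, sub_right_comm]
    _ = ∫⁻ u, μ ((fun x => (x, u)) ⁻¹' E) := by
        rw [← Measure.prod_apply hE, Measure.prod_apply_symm hE]
    _ = ∫⁻ u, μ ({x | u + c < f x} \ {x | u < g x}) := by
        congr! 3 with u
        ext x; simp [E, and_comm]

lemma ofReal_abs_sub_eq_add (x : ℝ) {c : ℝ} (hc : 0 ≤ c) :
    ENNReal.ofReal (|x| - c) = ENNReal.ofReal (x - c) + ENNReal.ofReal (-x - c) := by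
  rcases le_total 0 x with hx | hx
  · rw [abs_of_nonneg hx, ENNReal.ofReal_of_nonpos (by linarith : -x - c ≤ 0), add_zero]
  · rw [abs_of_nonpos hx, ENNReal.ofReal_of_nonpos (by linarith : x - c ≤ 0), zero_add]

variable [LinearOrder α] {I : Set α} {φ g h : α → ℝ}

lemma lintegral_ofReal_abs_sub_sub_le_of_map_eq (hI : MeasurableSet I) (hμI : μ I ≠ ∞)
    (hφ : Measurable φ) (hg : Measurable g) (hh : Measurable h) (hφmono : MonotoneOn φ I)
    (hhmono : MonotoneOn h I) (hmap : (μ.restrict I).map φ = (μ.restrict I).map g)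
    {c : ℝ} (hc : 0 ≤ c) :
    ∫⁻ s in I, ENNReal.ofReal (|φ s - h s| - c) ∂μ ≤
      ∫⁻ s in I, ENNReal.ofReal (|g s - h s| - c) ∂μ := by
  have := isFiniteMeasure_restrict.2 hμI
  have hlevel (v : ℝ) : μ.restrict I {s | v < g s} = μ.restrict I {s | v < φ s} := by
    have := congrArg (· (Ioi v)) hmap
    rw [Measure.map_apply hφ measurableSet_Ioi, Measure.map_apply hg measurableSet_Ioi] at this
    exact this.symm
  have hsuper {f : α → ℝ} (hf : Measurable f) (v : ℝ) : MeasurableSet {s | v < f s} :=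
    measurableSet_lt measurable_const hf
  have hdiff (v u : ℝ) := measure_diff_le_of_nested (hsuper hg v) (hsuper hφ v) (hsuper hh u)
    (hlevel v) (ae_restrict_nested_of_monotoneOn hI hφmono hhmono v u)
  simp_rw [ofReal_abs_sub_eq_add _ hc, neg_sub]
  rw [lintegral_add_left (by fun_prop), lintegral_add_left (by fun_prop),
    lintegral_ofReal_sub_sub hφ hh, lintegral_ofReal_sub_sub hh hφ,
    lintegral_ofReal_sub_sub hg hh, lintegral_ofReal_sub_sub hh hg]
  exact add_le_add (lintegral_mono fun u => (hdiff (u + c) u).1)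
    (lintegral_mono fun u => (hdiff u (u + c)).2)

end Hinge

lemma integral_mul_rpow_mul_sub {a p : ℝ} (ha : 0 ≤ a) (hp : 1 < p) :
    ∫ c in (0)..a, p * (p - 1) * c ^ (p - 2) * (a - c) = a ^ p := by
  have hsplit : EqOn (fun c => p * (p - 1) * c ^ (p - 2) * (a - c))
      (fun c => p * (p - 1) * a * c ^ (p - 2) - p * (p - 1) * c ^ (p - 1)) (uIcc 0 a) := by
    intro c hc
    have := Real.rpow_add_one' (uIcc_of_le ha ▸ hc).1 (by linarith : p - 2 + 1 ≠ 0)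
    rw [show p - 2 + 1 = p - 1 by ring] at this
    simp only [this]
    ring
  have hint (r : ℝ) (hr : -1 < r) (k : ℝ) : IntervalIntegrable (fun c => k * c ^ r) volume 0 a :=
    (intervalIntegral.intervalIntegrable_rpow' hr).const_mul k
  rw [intervalIntegral.integral_congr hsplit, intervalIntegral.integral_sub
      (hint _ (by linarith) _) (hint _ (by linarith) _),
    intervalIntegral.integral_const_mul, intervalIntegral.integral_const_mul,
    integral_rpow (Or.inl (by linarith)), integral_rpow (Or.inl (by linarith)),
    show p - 2 + 1 = p - 1 by ring, show p - 1 + 1 = p by ring,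
    Real.zero_rpow (by linarith), Real.zero_rpow (by linarith),
    show a ^ p = a ^ (p - 1) * a by rw [← Real.rpow_add_one' ha (by linarith), sub_add_cancel]]
  have : p - 1 ≠ 0 := by linarith
  field_simp
  ring

lemma ofReal_rpow_eq_lintegral {a p : ℝ} (ha : 0 ≤ a) (hp : 1 < p) :
    ENNReal.ofReal (a ^ p) =
      ∫⁻ c in Ioi 0, ENNReal.ofReal (p * (p - 1) * c ^ (p - 2)) * ENNReal.ofReal (a - c) := by
  have hw {c : ℝ} (hc : 0 ≤ c) : 0 ≤ p * (p - 1) * c ^ (p - 2) :=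
    mul_nonneg (mul_nonneg (by linarith) (by linarith)) (Real.rpow_nonneg hc _)
  have hint : IntegrableOn (fun c => p * (p - 1) * c ^ (p - 2) * (a - c)) (Ioc 0 a) := by
    refine (intervalIntegrable_iff_integrableOn_Ioc_of_le ha).1 ?_
    exact ((intervalIntegral.intervalIntegrable_rpow' (by linarith)).const_mul _).mul_continuousOn
      (by fun_prop)
  calc ENNReal.ofReal (a ^ p)
      = ENNReal.ofReal (∫ c in Ioc 0 a, p * (p - 1) * c ^ (p - 2) * (a - c)) := by
        rw [← intervalIntegral.integral_of_le ha, integral_mul_rpow_mul_sub ha hp]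
    _ = ∫⁻ c in Ioc 0 a, ENNReal.ofReal (p * (p - 1) * c ^ (p - 2) * (a - c)) :=
        ofReal_integral_eq_lintegral_ofReal hint
          (ae_restrict_of_forall_mem measurableSet_Ioc fun c hc =>
            mul_nonneg (hw hc.1.le) (sub_nonneg.2 hc.2))
    _ = ∫⁻ c in Ioi 0, ENNReal.ofReal (p * (p - 1) * c ^ (p - 2) * (a - c)) := by
        have hzero : ∫⁻ c in Ioi a, ENNReal.ofReal (p * (p - 1) * c ^ (p - 2) * (a - c)) = 0 := by
          refine (setLIntegral_congr_fun measurableSet_Ioi fun c hc => ?_).trans lintegral_zero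
          exact ENNReal.ofReal_of_nonpos
            (mul_nonpos_of_nonneg_of_nonpos (hw (ha.trans hc.le)) (by linarith [mem_Ioi.1 hc]))
        rw [← Ioc_union_Ioi_eq_Ioi ha,
          lintegral_union measurableSet_Ioi (Ioc_disjoint_Ioi le_rfl), hzero, add_zero]
    _ = _ := setLIntegral_congr_fun measurableSet_Ioi fun c hc => ENNReal.ofReal_mul (hw hc.le)

lemma lintegral_ofReal_rpow_le {α : Type*} [MeasurableSpace α] {μ : Measure α} [SFinite μ]
    {F G : α → ℝ} (hF : Measurable F) (hG : Measurable G) (hF₀ : ∀ x, 0 ≤ F x)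
    (hG₀ : ∀ x, 0 ≤ G x)
    (h : ∀ c, 0 ≤ c → ∫⁻ x, ENNReal.ofReal (F x - c) ∂μ ≤ ∫⁻ x, ENNReal.ofReal (G x - c) ∂μ)
    {p : ℝ} (hp : 1 ≤ p) :
    ∫⁻ x, ENNReal.ofReal (F x ^ p) ∂μ ≤ ∫⁻ x, ENNReal.ofReal (G x ^ p) ∂μ := by
  rcases hp.eq_or_lt with rfl | hp
  · simpa using h 0 le_rfl
  have hmix {H : α → ℝ} (hH : Measurable H) (hH₀ : ∀ x, 0 ≤ H x) :
      ∫⁻ x, ENNReal.ofReal (H x ^ p) ∂μ = ∫⁻ c in Ioi 0,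
        ENNReal.ofReal (p * (p - 1) * c ^ (p - 2)) * ∫⁻ x, ENNReal.ofReal (H x - c) ∂μ := by
    simp_rw [ofReal_rpow_eq_lintegral (hH₀ _) hp]
    rw [lintegral_lintegral_swap (by fun_prop)]
    exact lintegral_congr fun c => lintegral_const_mul' _ _ ENNReal.ofReal_ne_top
  rw [hmix hF hF₀, hmix hG hG₀]
  exact setLIntegral_mono' measurableSet_Ioi fun c hc => mul_le_mul' le_rfl (h c hc.le)

theorem lintegral_ofReal_abs_sub_rpow_le_of_map_eq {α : Type*} [MeasurableSpace α]
    [LinearOrder α] {μ : Measure α} {I : Set α} (hI : MeasurableSet I) (hμI : μ I ≠ ∞)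
    {φ g h : α → ℝ} (hφ : Measurable φ) (hg : Measurable g) (hh : Measurable h)
    (hφmono : MonotoneOn φ I) (hhmono : MonotoneOn h I)
    (hmap : (μ.restrict I).map φ = (μ.restrict I).map g) {p : ℝ} (hp : 1 ≤ p) :
    ∫⁻ s in I, ENNReal.ofReal (|φ s - h s| ^ p) ∂μ ≤
      ∫⁻ s in I, ENNReal.ofReal (|g s - h s| ^ p) ∂μ := by
  have := isFiniteMeasure_restrict.2 hμI
  exact lintegral_ofReal_rpow_le (by fun_prop) (by fun_prop) (fun _ => abs_nonneg _)
    (fun _ => abs_nonneg _)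
    (fun _ hc => lintegral_ofReal_abs_sub_sub_le_of_map_eq hI hμI hφ hg hh hφmono hhmono hmap hc)
    hp

theorem setLIntegral_Icc_ofReal_abs_quantile_sub_rpow_le {g h : ℝ → ℝ} (hg : Measurable g)
    (hh : Measurable h) (hmono : MonotoneOn h (Icc 0 1)) {p : ℝ} (hp : 1 ≤ p) :
    ∫⁻ t in Icc 0 1,
        ENNReal.ofReal (|quantile ((volume.restrict (Icc 0 1)).map g) t - h t| ^ p) ≤
      ∫⁻ t in Icc 0 1, ENNReal.ofReal (|g t - h t| ^ p) := by
  have : IsProbabilityMeasure (volume.restrict (Icc (0 : ℝ) 1)) := ⟨by simp⟩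
  have := Measure.isProbabilityMeasure_map (μ := volume.restrict (Icc (0 : ℝ) 1)) hg.aemeasurable
  have hIoo : volume.restrict (Ioo (0 : ℝ) 1) = volume.restrict (Icc 0 1) :=
    Measure.restrict_congr_set Ioo_ae_eq_Icc
  rw [← setLIntegral_congr Ioo_ae_eq_Icc, ← setLIntegral_congr Ioo_ae_eq_Icc]
  refine lintegral_ofReal_abs_sub_rpow_le_of_map_eq measurableSet_Ioo (by simp)
    (measurable_quantile _) hg hh (monotoneOn_quantile _) (hmono.mono Ioo_subset_Icc_self) ?_ hp
  rw [map_restrict_Ioo_quantile, hIoo]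

lemma lintegral_pi_le_of_forall_update_le {ι : Type*} [Fintype ι] [DecidableEq ι]
    {X : ι → Type*} [∀ i, MeasurableSpace (X i)] {μ : ∀ i, Measure (X i)}
    [∀ i, SigmaFinite (μ i)] {F G : (∀ i, X i) → ℝ≥0∞} (hF : Measurable F) (hG : Measurable G)
    (j : ι) (h : ∀ x, ∫⁻ t, F (update x j t) ∂μ j ≤ ∫⁻ t, G (update x j t) ∂μ j) :
    ∫⁻ x, F x ∂Measure.pi μ ≤ ∫⁻ x, G x ∂Measure.pi μ := by
  rcases isEmpty_or_nonempty (∀ i, X i) with hX | ⟨⟨x⟩⟩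
  · simp
  rw [lintegral_eq_lmarginal_univ x, lintegral_eq_lmarginal_univ x,
    lmarginal_erase' F hF (Finset.mem_univ j), lmarginal_erase' G hG (Finset.mem_univ j)]
  exact lmarginal_mono h x

lemma update_mem_Icc_iff {ι : Type*} [DecidableEq ι] {a b x : ι → ℝ} {j : ι} {t : ℝ} :
    update x j t ∈ Icc a b ↔ t ∈ Icc (a j) (b j) ∧ ∀ i ≠ j, x i ∈ Icc (a i) (b i) := by
  rw [← pi_univ_Icc, update_mem_pi_iff]
  simp [and_comm]

lemma setLIntegral_Icc_le_of_forall_update_le {ι : Type*} [Fintype ι] [DecidableEq ι]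
    {F G : (ι → ℝ) → ℝ≥0∞} (hF : Measurable F) (hG : Measurable G) (j : ι)
    (h : ∀ x, (∀ i ≠ j, x i ∈ Icc 0 1) →
      ∫⁻ t in Icc 0 1, F (update x j t) ≤ ∫⁻ t in Icc 0 1, G (update x j t)) :
    ∫⁻ x in Icc 0 1, F x ≤ ∫⁻ x in Icc 0 1, G x := by
  rw [← lintegral_indicator measurableSet_Icc, ← lintegral_indicator measurableSet_Icc, volume_pi]
  refine lintegral_pi_le_of_forall_update_le (hF.indicator measurableSet_Icc)
    (hG.indicator measurableSet_Icc) j fun x => ?_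
  by_cases hx : ∀ i ≠ j, x i ∈ Icc 0 1
  · have hslice (H : (ι → ℝ) → ℝ≥0∞) : (fun t => (Icc 0 1).indicator H (update x j t)) =
        (Icc 0 1).indicator fun t => H (update x j t) := by
      ext t
      by_cases ht : t ∈ Icc (0 : ℝ) 1
      · rw [indicator_of_mem ht]
        exact indicator_of_mem (update_mem_Icc_iff.2 ⟨ht, hx⟩) H
      · rw [indicator_of_notMem ht]
        exact indicator_of_notMem (fun hmem => ht (update_mem_Icc_iff.1 hmem).1) H
    simp only [hslice, lintegral_indicator measurableSet_Icc]
    exact h x hx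
  · have hout (t : ℝ) : update x j t ∉ Icc 0 1 := fun hmem => hx (update_mem_Icc_iff.1 hmem).2
    simp [indicator_of_notMem (hout _)]

lemma integral_le_integral_of_lintegral_ofReal_le {α : Type*} [MeasurableSpace α]
    {μ : Measure α} {f g : α → ℝ} (hf : 0 ≤ᵐ[μ] f) (hfm : AEStronglyMeasurable f μ)
    (hg : 0 ≤ᵐ[μ] g) (hgi : Integrable g μ)
    (h : ∫⁻ x, ENNReal.ofReal (f x) ∂μ ≤ ∫⁻ x, ENNReal.ofReal (g x) ∂μ) :
    ∫ x, f x ∂μ ≤ ∫ x, g x ∂μ := by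
  rw [integral_eq_lintegral_of_nonneg_ae hf hfm, integral_eq_lintegral_of_nonneg_ae hg hgi.1]
  exact ENNReal.toReal_mono hgi.lintegral_lt_top.ne h

/-- Rearrangement along the `j`-th coordinate weakly reduces the `L^p` estimation
error against a weakly increasing target, for `p ∈ [1,∞)`. -/
theorem rearrCoord_reduces_Lp_error {d : ℕ} (j : Fin d) (K : Set ℝ)
    (hK : Bornology.IsBounded K)
    (f₀ fbar : (Fin d → ℝ) → ℝ)
    (hf₀K : ∀ x ∈ Set.Icc (0 : Fin d → ℝ) 1, f₀ x ∈ K)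
    (hfbarK : ∀ x ∈ Set.Icc (0 : Fin d → ℝ) 1, fbar x ∈ K)
    (hf₀mono : MonotoneOn f₀ (Set.Icc (0 : Fin d → ℝ) 1))
    (hf₀meas : Measurable f₀) (hfbarmeas : Measurable fbar)
    (p : ℝ) (hp : 1 ≤ p) :
    (∫ x in Set.Icc (0 : Fin d → ℝ) 1, |rearrCoord j fbar x - f₀ x| ^ p) ^ (1 / p) ≤
      (∫ x in Set.Icc (0 : Fin d → ℝ) 1, |fbar x - f₀ x| ^ p) ^ (1 / p) := by
  obtain ⟨C, hC⟩ := hK.exists_norm_le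
  have hrearr := measurable_rearrCoord j hfbarmeas
  have hint : IntegrableOn (fun x => |fbar x - f₀ x| ^ p) (Icc 0 1) := by
    refine Measure.integrableOn_of_bounded (M := (C + C) ^ p) isCompact_Icc.measure_lt_top.ne
      (by fun_prop : Measurable _).aestronglyMeasurable
      (ae_restrict_of_forall_mem measurableSet_Icc fun x hx => ?_)
    rw [Real.norm_of_nonneg (by positivity)]
    gcongr
    exact (abs_sub _ _).trans (add_le_add (hC _ (hfbarK x hx)) (hC _ (hf₀K x hx)))
  refine Real.rpow_le_rpow (setIntegral_nonneg measurableSet_Icc fun _ _ => by positivity) ?_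
    (by positivity)
  refine integral_le_integral_of_lintegral_ofReal_le (ae_of_all _ fun _ => by positivity)
    (by fun_prop : Measurable _).aestronglyMeasurable (ae_of_all _ fun _ => by positivity) hint
    (setLIntegral_Icc_le_of_forall_update_le (by fun_prop) (by fun_prop) j fun x hx => ?_)
  simp only [rearrCoord_update j hfbarmeas]
  exact setLIntegral_Icc_ofReal_abs_quantile_sub_rpow_le (by fun_prop) (by fun_prop)
    (hf₀mono.comp ((update_mono (f := x) (i := j)).monotoneOn _)
      fun t ht => update_mem_Icc_iff.2 ⟨ht, hx⟩) hp
end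

section
/- (Length reduction of rearranged confidence bands.) Let ℓ, u : [0,1] → K be bounded measurable with ℓ ≤ u, and let ℓ*, u* be their increasing rearrangements. Then for every p ∈ [1,∞), (∫₀¹ |u*(x) − ℓ*(x)|^p dx)^{1/p} ≤ (∫₀¹ |u(x) − ℓ(x)|^p dx)^{1/p}. -/
open MeasureTheory Set ProbabilityTheory
open scoped ENNReal

/-!
For `p ≥ 1` there is a measure `ν` on `ℝ × ℝ` with `ν ([a, ∞) × (-∞, b)) = (b - a) ^ p` whenever
`a ≤ b`: the image of Lebesgue measure under the diagonal map for `p = 1`, and the density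
`p (p - 1) (t - s) ^ (p - 2)` on `{s < t}` for `p > 1`. By Tonelli, for `f ≤ g` this gives
`∫ (g - f) ^ p = ∫ |{f ≤ s ∧ t < g}| dν(s, t)`, so it suffices to compare the measures of these
sets. If `F_f` is the distribution function of `f`, then on `(0, 1)` the set
`{ℓ* ≤ s ∧ t < u*}` lies in `(F_u(t), F_ℓ(s)]`, of length at most
`F_ℓ(s) - F_u(t) ≤ |{ℓ ≤ s ∧ t < u}|`.
-/

/-- Increasing rearrangement of a function on [0,1]. -/
noncomputable def rearr (f : ℝ → ℝ) (x : ℝ) : ℝ :=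
  sInf {y : ℝ | x ≤ (volume (Set.Icc (0:ℝ) 1 ∩ {u : ℝ | f u ≤ y})).toReal}

theorem lintegral_Ioo_ofReal_deriv_eq_sub {g g' : ℝ → ℝ} {a b : ℝ} (hab : a ≤ b)
    (hcont : ContinuousOn g (Icc a b)) (hderiv : ∀ x ∈ Ioo a b, HasDerivAt g (g' x) x)
    (hpos : ∀ x ∈ Ioo a b, 0 ≤ g' x) :
    ∫⁻ x in Ioo a b, ENNReal.ofReal (g' x) = ENNReal.ofReal (g b - g a) := by
  have hint : IntegrableOn g' (Ioc a b) :=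
    intervalIntegral.integrableOn_deriv_of_nonneg hcont hderiv hpos
  rw [← ofReal_integral_eq_lintegral_ofReal (hint.mono_set Ioo_subset_Ioc_self)
      ((ae_restrict_iff' measurableSet_Ioo).2 (ae_of_all _ hpos)),
    ← integral_Ioc_eq_integral_Ioo, ← intervalIntegral.integral_of_le hab,
    intervalIntegral.integral_eq_sub_of_hasDerivAt_of_le hab hcont hderiv
      ((intervalIntegrable_iff_integrableOn_Ioc_of_le hab).2 hint)]

theorem map_diag_Ici_prod_Iio (a b : ℝ) :
    (volume.map fun s : ℝ => (s, s)) (Ici a ×ˢ Iio b) = ENNReal.ofReal (b - a) := by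
  rw [Measure.map_apply (by fun_prop) (measurableSet_Ici.prod measurableSet_Iio)]
  exact Real.volume_Ico

noncomputable def rpowDensity (p : ℝ) : ℝ × ℝ → ℝ≥0∞ :=
  {q | q.1 < q.2}.indicator fun q => ENNReal.ofReal (p * ((p - 1) * (q.2 - q.1) ^ (p - 2)))

theorem measurable_rpowDensity (p : ℝ) : Measurable (rpowDensity p) :=
  (Measurable.ennreal_ofReal (by fun_prop)).indicator
    (measurableSet_lt measurable_fst measurable_snd)

theorem lintegral_Iio_rpowDensity {p : ℝ} (hp : 1 < p) (s b : ℝ) :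
    ∫⁻ t in Iio b, rpowDensity p (s, t) =
      (Iio b).indicator (fun s => ENNReal.ofReal (p * (b - s) ^ (p - 1))) s := by
  change ∫⁻ t in Iio b,
    (Ioi s).indicator (fun t => ENNReal.ofReal (p * ((p - 1) * (t - s) ^ (p - 2)))) t = _
  rw [setLIntegral_indicator measurableSet_Ioi, Ioi_inter_Iio]
  by_cases hsb : s < b
  · rw [indicator_of_mem (mem_Iio.2 hsb)]
    have hcont : Continuous fun t : ℝ => p * (t - s) ^ (p - 1) := by
      have := Real.continuous_rpow_const (q := p - 1) (by linarith)
      fun_prop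
    refine (lintegral_Ioo_ofReal_deriv_eq_sub hsb.le hcont.continuousOn (fun t ht => ?_)
      (fun t ht => ?_)).trans (by simp [Real.zero_rpow (by linarith : p - 1 ≠ 0)])
    · refine ((((hasDerivAt_id' t).sub_const s).rpow_const
        (Or.inl (sub_pos.2 ht.1).ne')).const_mul p).congr_deriv ?_
      ring_nf
    · have := (sub_pos.2 ht.1).le
      have := hp.le
      positivity
  · rw [indicator_of_notMem (mt mem_Iio.1 hsb), Ioo_eq_empty hsb, Measure.restrict_empty,
      lintegral_zero_measure]

theorem withDensity_rpowDensity_Ici_prod_Iio {p : ℝ} (hp : 1 < p) {a b : ℝ} (hab : a ≤ b) :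
    (volume.withDensity (rpowDensity p)) (Ici a ×ˢ Iio b) = ENNReal.ofReal ((b - a) ^ p) := by
  rw [withDensity_apply _ (measurableSet_Ici.prod measurableSet_Iio), Measure.volume_eq_prod,
    ← Measure.prod_restrict, lintegral_prod _ (measurable_rpowDensity p).aemeasurable]
  simp_rw [lintegral_Iio_rpowDensity hp]
  rw [setLIntegral_indicator measurableSet_Iio, Iio_inter_Ici,
    setLIntegral_congr Ioo_ae_eq_Ico.symm]
  have hcont : Continuous fun s : ℝ => -(b - s) ^ p := by
    have := Real.continuous_rpow_const (q := p) (by linarith)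
    fun_prop
  refine (lintegral_Ioo_ofReal_deriv_eq_sub hab hcont.continuousOn (fun s hs => ?_)
    (fun s hs => ?_)).trans (by simp [Real.zero_rpow (by linarith : p ≠ 0)])
  · refine ((((hasDerivAt_id' s).const_sub b).rpow_const
      (Or.inl (sub_pos.2 hs.2).ne')).neg).congr_deriv ?_
    ring_nf
  · have := (sub_pos.2 hs.2).le
    have := hp.le
    positivity

theorem exists_measure_Ici_prod_Iio_eq_rpow {p : ℝ} (hp : 1 ≤ p) :
    ∃ ν : Measure (ℝ × ℝ), SFinite ν ∧
      ∀ a b, a ≤ b → ν (Ici a ×ˢ Iio b) = ENNReal.ofReal ((b - a) ^ p) := by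
  rcases hp.eq_or_lt with rfl | hp
  · exact ⟨volume.map fun s => (s, s), inferInstance, fun a b _ => by
      rw [map_diag_Ici_prod_Iio, Real.rpow_one]⟩
  · exact ⟨volume.withDensity (rpowDensity p), inferInstance,
      fun a b => withDensity_rpowDensity_Ici_prod_Iio hp⟩

theorem lintegral_measure_Ici_prod_Iio {α : Type*} [MeasurableSpace α] {μ : Measure α}
    [SFinite μ] (ν : Measure (ℝ × ℝ)) [SFinite ν] {f g : α → ℝ} (hf : AEMeasurable f μ)
    (hg : AEMeasurable g μ) :
    ∫⁻ x, ν (Ici (f x) ×ˢ Iio (g x)) ∂μ = ∫⁻ q, μ {x | f x ≤ q.1 ∧ q.2 < g x} ∂ν := by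
  set T := {z : α × (ℝ × ℝ) | hf.mk f z.1 ≤ z.2.1 ∧ z.2.2 < hg.mk g z.1}
  have hT : MeasurableSet T :=
    (measurableSet_le (hf.measurable_mk.comp measurable_fst)
      (measurable_fst.comp measurable_snd)).inter
      (measurableSet_lt (measurable_snd.comp measurable_snd)
        (hg.measurable_mk.comp measurable_fst))
  calc ∫⁻ x, ν (Ici (f x) ×ˢ Iio (g x)) ∂μ
      = ∫⁻ x, ν (Ici (hf.mk f x) ×ˢ Iio (hg.mk g x)) ∂μ := by
        refine lintegral_congr_ae ?_
        filter_upwards [hf.ae_eq_mk, hg.ae_eq_mk] with x hfx hgx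
        rw [hfx, hgx]
    _ = μ.prod ν T := (Measure.prod_apply hT).symm
    _ = ∫⁻ q, μ {x | hf.mk f x ≤ q.1 ∧ q.2 < hg.mk g x} ∂ν := Measure.prod_apply_symm hT
    _ = ∫⁻ q, μ {x | f x ≤ q.1 ∧ q.2 < g x} ∂ν := by
        refine lintegral_congr fun q => measure_congr ?_
        filter_upwards [hf.ae_eq_mk, hg.ae_eq_mk] with x hfx hgx
        change (_ ≤ _ ∧ _ < _) = (_ ≤ _ ∧ _ < _)
        rw [hfx, hgx]

theorem lintegral_ofReal_rpow_sub_le_of_measure_le {α β : Type*}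
    [MeasurableSpace α] [MeasurableSpace β]
    {μ₁ : Measure α} {μ₂ : Measure β} [SFinite μ₁] [SFinite μ₂] {p : ℝ} (hp : 1 ≤ p)
    {f₁ g₁ : α → ℝ} {f₂ g₂ : β → ℝ} (hf₁ : AEMeasurable f₁ μ₁) (hg₁ : AEMeasurable g₁ μ₁)
    (hf₂ : AEMeasurable f₂ μ₂) (hg₂ : AEMeasurable g₂ μ₂)
    (hfg₁ : ∀ᵐ x ∂μ₁, f₁ x ≤ g₁ x) (hfg₂ : ∀ᵐ x ∂μ₂, f₂ x ≤ g₂ x)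
    (h : ∀ s t, μ₁ {x | f₁ x ≤ s ∧ t < g₁ x} ≤ μ₂ {x | f₂ x ≤ s ∧ t < g₂ x}) :
    ∫⁻ x, ENNReal.ofReal ((g₁ x - f₁ x) ^ p) ∂μ₁ ≤
      ∫⁻ x, ENNReal.ofReal ((g₂ x - f₂ x) ^ p) ∂μ₂ := by
  obtain ⟨ν, _, hν⟩ := exists_measure_Ici_prod_Iio_eq_rpow hp
  rw [lintegral_congr_ae (hfg₁.mono fun x hx => (hν _ _ hx).symm),
    lintegral_congr_ae (hfg₂.mono fun x hx => (hν _ _ hx).symm),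
    lintegral_measure_Ici_prod_Iio ν hf₁ hg₁, lintegral_measure_Ici_prod_Iio ν hf₂ hg₂]
  exact lintegral_mono fun q => h q.1 q.2

theorem integral_abs_sub_rpow_eq_toReal_lintegral {α : Type*} [MeasurableSpace α] {μ : Measure α}
    {f g : α → ℝ} (hf : AEMeasurable f μ) (hg : AEMeasurable g μ) (hfg : ∀ᵐ x ∂μ, f x ≤ g x)
    (p : ℝ) : ∫ x, |g x - f x| ^ p ∂μ = (∫⁻ x, ENNReal.ofReal ((g x - f x) ^ p) ∂μ).toReal := by
  rw [integral_eq_lintegral_of_nonneg_ae (f := fun x => |g x - f x| ^ p)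
    (ae_of_all _ fun x => by positivity)
    ((hg.sub hf).abs.pow_const p).aestronglyMeasurable]
  exact congrArg _ (lintegral_congr_ae (hfg.mono fun x hx => by
    simp only [abs_of_nonneg (sub_nonneg.2 hx)]))

noncomputable def law (f : ℝ → ℝ) : Measure ℝ := (volume.restrict (Icc (0:ℝ) 1)).map f

section Rearrangement

variable {f l u : ℝ → ℝ} {x : ℝ}

theorem isProbabilityMeasure_law (hf : Measurable f) : IsProbabilityMeasure (law f) := by
  have : IsProbabilityMeasure (volume.restrict (Icc (0:ℝ) 1)) := ⟨by simp⟩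
  exact Measure.isProbabilityMeasure_map hf.aemeasurable

theorem ofReal_cdf_law (hf : Measurable f) (y : ℝ) :
    ENNReal.ofReal (cdf (law f) y) = volume.restrict (Icc (0:ℝ) 1) {x | f x ≤ y} := by
  have := isProbabilityMeasure_law hf
  rw [ofReal_cdf, law, Measure.map_apply hf measurableSet_Iic]
  rfl

theorem cdf_law (hf : Measurable f) (y : ℝ) :
    cdf (law f) y = (volume (Icc (0:ℝ) 1 ∩ {x | f x ≤ y})).toReal := by
  rw [← ENNReal.toReal_ofReal (cdf_nonneg _ y), ofReal_cdf_law hf,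
    Measure.restrict_apply' measurableSet_Icc, inter_comm]

theorem rearr_eq_csInf_cdf (hf : Measurable f) (x : ℝ) :
    rearr f x = sInf {y | x ≤ cdf (law f) y} := by
  simp only [cdf_law hf, rearr]

theorem csInf_le_iff_le_cdf (μ : Measure ℝ) (hx : x ∈ Ioo 0 1) (y : ℝ) :
    sInf {z | x ≤ cdf μ z} ≤ y ↔ x ≤ cdf μ y := by
  have hbdd : BddBelow {z | x ≤ cdf μ z} := by
    obtain ⟨z₀, hz₀⟩ := ((tendsto_cdf_atBot μ).eventually (gt_mem_nhds hx.1)).exists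
    exact ⟨z₀, fun z hz => le_of_not_gt fun hzz₀ => (hz.trans (monotone_cdf μ hzz₀.le)).not_gt hz₀⟩
  refine ⟨fun h => ?_, fun h => csInf_le hbdd h⟩
  have hne : {z | x ≤ cdf μ z}.Nonempty :=
    ((tendsto_cdf_atTop μ).eventually (lt_mem_nhds hx.2)).exists.imp fun _ => le_of_lt
  have hright : ∀ z > y, x ≤ cdf μ z := fun z hz => by
    obtain ⟨w, hw, hwz⟩ := exists_lt_of_csInf_lt hne (h.trans_lt hz)
    exact hw.trans (monotone_cdf μ hwz.le)
  exact ge_of_tendsto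
    (((cdf μ).right_continuous y).mono_left (nhdsWithin_mono _ Ioi_subset_Ici_self))
    (eventually_nhdsWithin_of_forall hright)

theorem rearr_le_iff (hf : Measurable f) (hx : x ∈ Ioo 0 1) (y : ℝ) :
    rearr f x ≤ y ↔ x ≤ cdf (law f) y := by
  rw [rearr_eq_csInf_cdf hf]
  exact csInf_le_iff_le_cdf _ hx y

theorem monotoneOn_rearr (hf : Measurable f) : MonotoneOn (rearr f) (Ioo 0 1) :=
  fun _ hx _ hx' hxx' => (rearr_le_iff hf hx _).2 (hxx'.trans ((rearr_le_iff hf hx' _).1 le_rfl))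

theorem cdf_law_le_cdf_law (hl : Measurable l) (hu : Measurable u)
    (hlu : ∀ x ∈ Icc (0:ℝ) 1, l x ≤ u x) (y : ℝ) : cdf (law u) y ≤ cdf (law l) y := by
  rw [← ENNReal.ofReal_le_ofReal_iff (cdf_nonneg _ _), ofReal_cdf_law hl, ofReal_cdf_law hu]
  exact measure_mono_ae ((ae_restrict_iff' measurableSet_Icc).2
    (ae_of_all _ fun x hx (hux : u x ≤ y) => (hlu x hx).trans hux))

theorem rearr_le_rearr (hl : Measurable l) (hu : Measurable u)
    (hlu : ∀ x ∈ Icc (0:ℝ) 1, l x ≤ u x) (hx : x ∈ Ioo 0 1) : rearr l x ≤ rearr u x :=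
  (rearr_le_iff hl hx _).2
    (((rearr_le_iff hu hx _).1 le_rfl).trans (cdf_law_le_cdf_law hl hu hlu _))

theorem restrict_setOf_rearr_le_and_lt_rearr_le (hl : Measurable l) (hu : Measurable u)
    (s t : ℝ) :
    volume.restrict (Ioo 0 1) {x | rearr l x ≤ s ∧ t < rearr u x}
      ≤ volume.restrict (Icc 0 1) {x | l x ≤ s ∧ t < u x} := by
  set μ := volume.restrict (Icc (0:ℝ) 1)
  have hsub : {x | rearr l x ≤ s ∧ t < rearr u x} ∩ Ioo 0 1 ⊆
      Ioc (cdf (law u) t) (cdf (law l) s) :=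
    fun x ⟨⟨hls, hut⟩, hx⟩ =>
      ⟨lt_of_not_ge fun h => hut.not_ge ((rearr_le_iff hu hx t).2 h), (rearr_le_iff hl hx s).1 hls⟩
  calc volume.restrict (Ioo 0 1) {x | rearr l x ≤ s ∧ t < rearr u x}
      ≤ volume (Ioc (cdf (law u) t) (cdf (law l) s)) := by
        rw [Measure.restrict_apply' measurableSet_Ioo]
        exact measure_mono hsub
    _ = μ {x | l x ≤ s} - μ {x | u x ≤ t} := by
        rw [Real.volume_Ioc, ENNReal.ofReal_sub _ (cdf_nonneg _ _), ofReal_cdf_law hl,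
          ofReal_cdf_law hu]
    _ ≤ μ {x | l x ≤ s ∧ t < u x} := by
        rw [tsub_le_iff_right]
        exact (measure_mono fun x (hx : l x ≤ s) => (lt_or_ge t (u x)).imp (⟨hx, ·⟩) id).trans
          (measure_union_le _ _)

end Rearrangement

/-- Length reduction of rearranged confidence bands, for every `p ∈ [1,∞)`. -/
theorem rearranged_band_shorter (K : Set ℝ) (hK : Bornology.IsBounded K)
    (l u : ℝ → ℝ) (hlm : Measurable l) (hum : Measurable u)
    (hlK : ∀ x ∈ Set.Icc (0:ℝ) 1, l x ∈ K)
    (huK : ∀ x ∈ Set.Icc (0:ℝ) 1, u x ∈ K)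
    (hle : ∀ x ∈ Set.Icc (0:ℝ) 1, l x ≤ u x)
    (p : ℝ) (hp : 1 ≤ p) :
    (∫ x in Set.Icc (0:ℝ) 1, |rearr u x - rearr l x| ^ p) ^ (1 / p) ≤
      (∫ x in Set.Icc (0:ℝ) 1, |u x - l x| ^ p) ^ (1 / p) := by
  have hlu : ∀ᵐ x ∂volume.restrict (Icc 0 1), l x ≤ u x :=
    (ae_restrict_iff' measurableSet_Icc).2 (ae_of_all _ hle)
  have hlu_rearr : ∀ᵐ x ∂volume.restrict (Ioo 0 1), rearr l x ≤ rearr u x :=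
    (ae_restrict_iff' measurableSet_Ioo).2 (ae_of_all _ fun _ => rearr_le_rearr hlm hum hle)
  have hl_rearr := aemeasurable_restrict_of_monotoneOn (μ := volume) measurableSet_Ioo
    (monotoneOn_rearr hlm)
  have hu_rearr := aemeasurable_restrict_of_monotoneOn (μ := volume) measurableSet_Ioo
    (monotoneOn_rearr hum)
  have hfin : ∫⁻ x in Icc 0 1, ENNReal.ofReal ((u x - l x) ^ p) ≠ ⊤ := by
    obtain ⟨C, hC⟩ := hK.exists_norm_le
    refine (setLIntegral_lt_top_of_le_nnreal (by simp) ⟨((2 * C) ^ p).toNNReal, fun x hx => ?_⟩).ne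
    have hlx := abs_le.1 (hC _ (hlK x hx))
    have hux := abs_le.1 (hC _ (huK x hx))
    exact ENNReal.ofReal_le_ofReal
      (Real.rpow_le_rpow (sub_nonneg.2 (hle x hx)) (by linarith) (by linarith))
  rw [setIntegral_congr_set Ioo_ae_eq_Icc.symm,
    integral_abs_sub_rpow_eq_toReal_lintegral hl_rearr hu_rearr hlu_rearr,
    integral_abs_sub_rpow_eq_toReal_lintegral hlm.aemeasurable hum.aemeasurable hlu]
  refine Real.rpow_le_rpow ENNReal.toReal_nonneg (ENNReal.toReal_mono hfin ?_) (by positivity)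
  exact lintegral_ofReal_rpow_sub_le_of_measure_le hp hl_rearr hu_rearr hlm.aemeasurable
    hum.aemeasurable hlu_rearr hlu (restrict_setOf_rearr_le_and_lt_rearr_le hlm hum)
end
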